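/- arXiv:1607.02986 — 2 statements merged into one kernel-verified Lean document; each statement's English description precedes it below -/
import Mathlib

section
/- Let (X, Y, E) be a bipartite graph in which every vertex has degree at most d_max. For a non-negative integer k ≤ |X|, let s = k·|E|/|X|. Then for any non-negative real γ < 1/2, if S is a uniformly random k-element subset of X, Pr[ |E(S, Y)| ∉ [(1−γ)·s, (1+γ)·s] ] ≤ 2·exp(−γ^2·s/(3·d_max)). -/
open Finset

attribute [local instance] Classical.propDecidable

noncomputable section

/-- `|E(S, T)|`, the number of edges of `E` with one endpoint in `S` and the other in `T`. -/
def edgeCount {X Y : Type*} (E : Finset (X × Y)) (S : Finset X) (T : Finset Y) : ℕ :=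
  (E.filter fun e => e.1 ∈ S ∧ e.2 ∈ T).card
section AuxEdgeConc
variable {α : Type*} [DecidableEq α]

lemma reindexR (u : Finset α) (m : ℕ) (G : Finset α → α → ℝ) :
    ∑ S ∈ powersetCard (m+1) u, ∑ x ∈ S, G S x
      = ∑ B ∈ powersetCard m u, ∑ x ∈ u \ B, G (insert x B) x := by
  rw [Finset.sum_sigma', Finset.sum_sigma']
  refine Finset.sum_nbij' (fun p => ⟨p.1.erase p.2, p.2⟩) (fun p => ⟨insert p.2 p.1, p.2⟩)
    ?_ ?_ ?_ ?_ ?_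
  · rintro ⟨S, x⟩ hp
    simp only [mem_sigma, mem_powersetCard] at hp ⊢
    obtain ⟨⟨hSu, hSc⟩, hx⟩ := hp
    refine ⟨⟨(erase_subset _ _).trans hSu, ?_⟩, ?_⟩
    · rw [card_erase_of_mem hx, hSc]; rfl
    · exact mem_sdiff.2 ⟨hSu hx, notMem_erase _ _⟩
  · rintro ⟨B, x⟩ hp
    simp only [mem_sigma, mem_powersetCard, mem_sdiff] at hp ⊢
    obtain ⟨⟨hBu, hBc⟩, hxu, hxB⟩ := hp
    exact ⟨⟨insert_subset hxu hBu, by rw [card_insert_of_notMem hxB, hBc]⟩, mem_insert_self _ _⟩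
  · rintro ⟨S, x⟩ hp
    simp only [mem_sigma, mem_powersetCard] at hp
    simp [insert_erase hp.2]
  · rintro ⟨B, x⟩ hp
    simp only [mem_sigma, mem_powersetCard, mem_sdiff] at hp
    simp [erase_insert hp.2.2]
  · rintro ⟨S, x⟩ hp
    simp only [mem_sigma, mem_powersetCard] at hp
    simp [insert_erase hp.2]

lemma step (u : Finset α) (a : α → ℝ) (ha : ∀ x ∈ u, 0 ≤ a x) (k : ℕ) (hk : k < u.card) :
    (u.card : ℝ) * (((k:ℝ)+1) * ∑ S ∈ powersetCard (k+1) u, ∏ x ∈ S, a x)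
      ≤ ((u.card - k : ℕ) : ℝ) *
        ((∑ x ∈ u, a x) * ∑ S ∈ powersetCard k u, ∏ x ∈ S, a x) := by
  have h1 : ((k:ℝ)+1) * ∑ S ∈ powersetCard (k+1) u, ∏ x ∈ S, a x
      = ∑ B ∈ powersetCard k u, (∏ x ∈ B, a x) * ∑ x ∈ u \ B, a x := by
    have := reindexR u k (fun S _ => ∏ y ∈ S, a y)
    rw [show (∑ S ∈ powersetCard (k+1) u, ∑ _x ∈ S, ∏ y ∈ S, a y)
        = ∑ S ∈ powersetCard (k+1) u, ((k:ℝ)+1) * ∏ y ∈ S, a y from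
      Finset.sum_congr rfl fun S hS => by
        rw [Finset.sum_const, (mem_powersetCard.1 hS).2]; push_cast; ring] at this
    rw [← Finset.mul_sum] at this
    rw [this]
    refine Finset.sum_congr rfl fun B hB => ?_
    rw [Finset.mul_sum]
    refine Finset.sum_congr rfl fun x hx => ?_
    rw [Finset.prod_insert (mem_sdiff.1 hx).2, mul_comm]
  have h2 : (∑ x ∈ u, a x) * ∑ S ∈ powersetCard k u, ∏ x ∈ S, a x
      = (∑ B ∈ powersetCard k u, (∏ x ∈ B, a x) * ∑ x ∈ B, a x)
        + ∑ B ∈ powersetCard k u, (∏ x ∈ B, a x) * ∑ x ∈ u \ B, a x := by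
    rw [Finset.mul_sum, ← Finset.sum_add_distrib]
    refine Finset.sum_congr rfl fun B hB => ?_
    rw [← Finset.sum_sdiff (mem_powersetCard.1 hB).1 (f := a)]
    ring
  -- key inequality : k * Q ≤ (n-k) * P
  have key : (k:ℝ) * ∑ B ∈ powersetCard k u, (∏ x ∈ B, a x) * ∑ x ∈ u \ B, a x
      ≤ ((u.card - k : ℕ) : ℝ) *
        ∑ B ∈ powersetCard k u, (∏ x ∈ B, a x) * ∑ x ∈ B, a x := by
    rcases Nat.eq_zero_or_pos k with rfl | hkpos
    · simp
    obtain ⟨m, rfl⟩ : ∃ m, k = m + 1 := ⟨k - 1, (Nat.succ_pred_eq_of_pos hkpos).symm⟩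
    -- P rewritten over pc m
    have hP : ∑ B ∈ powersetCard (m+1) u, (∏ x ∈ B, a x) * ∑ x ∈ B, a x
        = ∑ C ∈ powersetCard m u, (∏ x ∈ C, a x) * ∑ x ∈ u \ C, (a x)^2 := by
      have := reindexR u m (fun S x => a x * ∏ y ∈ S, a y)
      have hLHS : (∑ S ∈ powersetCard (m+1) u, ∑ x ∈ S, a x * ∏ y ∈ S, a y)
          = ∑ S ∈ powersetCard (m+1) u, (∏ x ∈ S, a x) * ∑ x ∈ S, a x := by
        refine Finset.sum_congr rfl fun S _ => ?_
        rw [Finset.mul_sum]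
        exact Finset.sum_congr rfl fun x _ => by ring
      rw [hLHS] at this
      rw [this]
      refine Finset.sum_congr rfl fun C hC => ?_
      rw [Finset.mul_sum]
      refine Finset.sum_congr rfl fun x hx => ?_
      rw [Finset.prod_insert (mem_sdiff.1 hx).2]
      ring
    -- (m+1) * Q rewritten over pc m
    have hQ : ((m:ℝ)+1) * ∑ B ∈ powersetCard (m+1) u, (∏ x ∈ B, a x) * ∑ x ∈ u \ B, a x
        = ∑ C ∈ powersetCard m u, (∏ x ∈ C, a x) *
            ∑ x ∈ u \ C, a x * ∑ y ∈ (u \ C).erase x, a y := by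
      have := reindexR u m (fun S _ => (∏ y ∈ S, a y) * ∑ y ∈ u \ S, a y)
      rw [show (∑ S ∈ powersetCard (m+1) u, ∑ _x ∈ S, (∏ y ∈ S, a y) * ∑ y ∈ u \ S, a y)
          = ∑ S ∈ powersetCard (m+1) u, ((m:ℝ)+1) * ((∏ y ∈ S, a y) * ∑ y ∈ u \ S, a y) from
        Finset.sum_congr rfl fun S hS => by
          rw [Finset.sum_const, (mem_powersetCard.1 hS).2]; push_cast; ring] at this
      rw [← Finset.mul_sum] at this
      rw [this]
      refine Finset.sum_congr rfl fun C hC => ?_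
      rw [Finset.mul_sum]
      refine Finset.sum_congr rfl fun x hx => ?_
      rw [Finset.prod_insert (mem_sdiff.1 hx).2, Finset.sdiff_insert]
      ring
    -- pointwise bound per C
    have hpt : ∀ C ∈ powersetCard m u,
        (∏ x ∈ C, a x) * ∑ x ∈ u \ C, a x * ∑ y ∈ (u \ C).erase x, a y
          ≤ ((u.card - (m+1) : ℕ) : ℝ) * ((∏ x ∈ C, a x) * ∑ x ∈ u \ C, (a x)^2) := by
      intro C hC
      obtain ⟨hCu, hCc⟩ := mem_powersetCard.1 hC
      have hD : (u \ C).card = u.card - m := by rw [card_sdiff_of_subset hCu, hCc]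
      have hprod : 0 ≤ ∏ x ∈ C, a x :=
        Finset.prod_nonneg fun x hx => ha x (hCu hx)
      have hinner : ∑ x ∈ u \ C, a x * ∑ y ∈ (u \ C).erase x, a y
          ≤ ((u.card - (m+1) : ℕ) : ℝ) * ∑ x ∈ u \ C, (a x)^2 := by
        have hrw : ∑ x ∈ u \ C, a x * ∑ y ∈ (u \ C).erase x, a y
            = (∑ x ∈ u \ C, a x)^2 - ∑ x ∈ u \ C, (a x)^2 := by
          rw [sq, Finset.sum_mul, ← Finset.sum_sub_distrib]
          refine Finset.sum_congr rfl fun x hx => ?_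
          rw [Finset.sum_erase_eq_sub hx]
          ring
        rw [hrw]
        have hcs : (∑ x ∈ u \ C, a x)^2 ≤ ((u \ C).card : ℝ) * ∑ x ∈ u \ C, (a x)^2 :=
          sq_sum_le_card_mul_sum_sq
        have hcast : ((u \ C).card : ℝ) = ((u.card - (m+1) : ℕ) : ℝ) + 1 := by
          rw [hD]
          push_cast [Nat.cast_sub (Nat.le_of_lt hk), Nat.cast_sub (by omega : m ≤ u.card)]
          ring
        nlinarith [Finset.sum_nonneg (fun x (hx : x ∈ u \ C) =>
          sq_nonneg (a x))]
      calc (∏ x ∈ C, a x) * ∑ x ∈ u \ C, a x * ∑ y ∈ (u \ C).erase x, a y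
          ≤ (∏ x ∈ C, a x) * (((u.card - (m+1) : ℕ) : ℝ) * ∑ x ∈ u \ C, (a x)^2) :=
            mul_le_mul_of_nonneg_left hinner hprod
        _ = ((u.card - (m+1) : ℕ) : ℝ) * ((∏ x ∈ C, a x) * ∑ x ∈ u \ C, (a x)^2) := by ring
    have hsum := Finset.sum_le_sum hpt
    rw [← Finset.mul_sum] at hsum
    rw [← hP] at hsum
    -- combine : (m+1)*Q ≤ (n-(m+1)) * P, and goal is (m+1)*Q ≤ (n-(m+1))*P. same!
    push_cast
    push_cast at hQ
    rw [hQ]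
    exact hsum
  have e1nn : 0 ≤ ∑ x ∈ u, a x := Finset.sum_nonneg ha
  have eknn : 0 ≤ ∑ S ∈ powersetCard k u, ∏ x ∈ S, a x :=
    Finset.sum_nonneg fun S hS => Finset.prod_nonneg fun x hx =>
      ha x ((mem_powersetCard.1 hS).1 hx)
  have hnk : ((u.card - k : ℕ) : ℝ) = (u.card : ℝ) - k := by
    push_cast [Nat.cast_sub (le_of_lt hk)]; ring
  rw [h1, h2]
  rw [hnk] at key ⊢
  nlinarith [key]

lemma maclaurin (u : Finset α) (a : α → ℝ) (ha : ∀ x ∈ u, 0 ≤ a x) :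
    ∀ k : ℕ, k ≤ u.card →
    (u.card : ℝ)^k * ∑ S ∈ powersetCard k u, ∏ x ∈ S, a x
      ≤ (u.card.choose k : ℝ) * (∑ x ∈ u, a x)^k := by
  intro k
  induction k with
  | zero => intro _; simp
  | succ k ih =>
    intro hk1
    have hk : k < u.card := hk1
    have IH := ih (le_of_lt hk)
    have hstep := step u a ha k hk
    have e1nn : 0 ≤ ∑ x ∈ u, a x := Finset.sum_nonneg ha
    have eknn : 0 ≤ ∑ S ∈ powersetCard k u, ∏ x ∈ S, a x :=
      Finset.sum_nonneg fun S hS => Finset.prod_nonneg fun x hx =>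
        ha x ((mem_powersetCard.1 hS).1 hx)
    have ek1nn : 0 ≤ ∑ S ∈ powersetCard (k+1) u, ∏ x ∈ S, a x :=
      Finset.sum_nonneg fun S hS => Finset.prod_nonneg fun x hx =>
        ha x ((mem_powersetCard.1 hS).1 hx)
    have hchoose : (u.card.choose (k+1) : ℝ) * ((k:ℝ)+1)
        = (u.card.choose k : ℝ) * ((u.card - k : ℕ) : ℝ) := by
      have := Nat.choose_succ_right_eq u.card k
      exact_mod_cast congrArg (fun n : ℕ => (n : ℝ)) this
    have hnn : (0:ℝ) ≤ ((u.card - k : ℕ) : ℝ) := Nat.cast_nonneg _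
    have hnpow : (0:ℝ) ≤ (u.card : ℝ)^k := by positivity
    -- multiply hstep by n^k, IH by (n-k)*e1, combine, divide by k+1
    have hmain : ((k:ℝ)+1) * ((u.card : ℝ)^(k+1) * ∑ S ∈ powersetCard (k+1) u, ∏ x ∈ S, a x)
        ≤ ((k:ℝ)+1) * ((u.card.choose (k+1) : ℝ) * (∑ x ∈ u, a x)^(k+1)) := by
      have t1 : ((k:ℝ)+1) * ((u.card : ℝ)^(k+1) * ∑ S ∈ powersetCard (k+1) u, ∏ x ∈ S, a x)
          = (u.card : ℝ)^k * ((u.card : ℝ) * (((k:ℝ)+1) * ∑ S ∈ powersetCard (k+1) u, ∏ x ∈ S, a x)) := by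
        ring
      have t2 := mul_le_mul_of_nonneg_left hstep hnpow
      have t3 : (u.card : ℝ)^k * (((u.card - k : ℕ) : ℝ) *
            ((∑ x ∈ u, a x) * ∑ S ∈ powersetCard k u, ∏ x ∈ S, a x))
          = (((u.card - k : ℕ) : ℝ) * (∑ x ∈ u, a x)) *
            ((u.card : ℝ)^k * ∑ S ∈ powersetCard k u, ∏ x ∈ S, a x) := by ring
      have t4 := mul_le_mul_of_nonneg_left IH (mul_nonneg hnn e1nn)
      calc ((k:ℝ)+1) * ((u.card : ℝ)^(k+1) * ∑ S ∈ powersetCard (k+1) u, ∏ x ∈ S, a x)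
          = (u.card : ℝ)^k * ((u.card : ℝ) * (((k:ℝ)+1) * ∑ S ∈ powersetCard (k+1) u, ∏ x ∈ S, a x)) := t1
        _ ≤ (u.card : ℝ)^k * (((u.card - k : ℕ) : ℝ) *
              ((∑ x ∈ u, a x) * ∑ S ∈ powersetCard k u, ∏ x ∈ S, a x)) := t2
        _ = (((u.card - k : ℕ) : ℝ) * (∑ x ∈ u, a x)) *
              ((u.card : ℝ)^k * ∑ S ∈ powersetCard k u, ∏ x ∈ S, a x) := t3
        _ ≤ (((u.card - k : ℕ) : ℝ) * (∑ x ∈ u, a x)) *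
              ((u.card.choose k : ℝ) * (∑ x ∈ u, a x)^k) := t4
        _ = ((u.card.choose k : ℝ) * ((u.card - k : ℕ) : ℝ)) * (∑ x ∈ u, a x)^(k+1) := by ring
        _ = ((k:ℝ)+1) * ((u.card.choose (k+1) : ℝ) * (∑ x ∈ u, a x)^(k+1)) := by
            rw [← hchoose]; ring
    have hpos : (0:ℝ) < (k:ℝ)+1 := by positivity
    exact le_of_mul_le_mul_left hmain hpos

lemma log_lb_up {x : ℝ} (h0 : 0 ≤ x) (h1 : x ≤ 1/2) : 2*x/3 ≤ Real.log (1+x) := by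
  have hx1 : (0:ℝ) < 1 + x := by linarith
  have hd : (0:ℝ) < 1 - 2*x/3 := by linarith
  have he : Real.exp (2*x/3) ≤ 1 + x := by
    have ha := Real.add_one_le_exp (-(2*x/3))
    have hb : Real.exp (2*x/3) ≤ 1/(1 - 2*x/3) := by
      rw [le_div_iff₀ hd]
      calc Real.exp (2*x/3) * (1 - 2*x/3) ≤ Real.exp (2*x/3) * Real.exp (-(2*x/3)) := by
            apply mul_le_mul_of_nonneg_left _ (Real.exp_nonneg _)
            linarith
        _ = 1 := by rw [← Real.exp_add]; simp
    refine hb.trans ?_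
    rw [div_le_iff₀ hd]
    nlinarith
  calc 2*x/3 = Real.log (Real.exp (2*x/3)) := (Real.log_exp _).symm
    _ ≤ Real.log (1+x) := Real.log_le_log (Real.exp_pos _) he

lemma log_ineq_up {x : ℝ} (h0 : 0 ≤ x) (h1 : x ≤ 1/2) :
    x + x^2/3 ≤ (1+x) * Real.log (1+x) := by
  set F : ℝ → ℝ := fun y => (1+y) * Real.log (1+y) - y - y^2/3 with hF
  have hderiv : ∀ y ∈ Set.Ioo (0:ℝ) (1/2), HasDerivAt F (Real.log (1+y) - 2*y/3) y := by
    intro y hy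
    have hy1 : (1:ℝ) + y ≠ 0 := by cases hy; intro h; linarith
    have h1' : HasDerivAt (fun z : ℝ => 1 + z) 1 y := (hasDerivAt_id y).const_add 1
    have hlog : HasDerivAt (fun z : ℝ => Real.log (1+z)) (1/(1+y)) y := by
      simpa using h1'.log hy1
    have hmul : HasDerivAt (fun z : ℝ => (1+z) * Real.log (1+z))
        (1 * Real.log (1+y) + (1+y) * (1/(1+y))) y := h1'.mul hlog
    have hq : HasDerivAt (fun z : ℝ => z^2/3) (2*y/3) y := by
      have := (hasDerivAt_pow 2 y).div_const 3
      simpa using this.congr_deriv (by ring)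
    have := (hmul.sub (hasDerivAt_id y)).sub hq
    convert this using 1
    · rfl
    · rfl
    · rfl
    · linear_combination -(mul_one_div_cancel hy1)
  have hmono : MonotoneOn F (Set.Icc (0:ℝ) (1/2)) := by
    apply monotoneOn_of_deriv_nonneg (convex_Icc _ _)
    · apply ContinuousOn.sub
      apply ContinuousOn.sub
      · apply ContinuousOn.mul (by fun_prop)
        apply Real.continuousOn_log.comp (by fun_prop)
        intro y hy
        simp only [Set.mem_Icc] at hy
        intro h
        simp only [Set.mem_singleton_iff] at h
        linarith [hy.1]
      · fun_prop
      · fun_prop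
    · rw [interior_Icc]
      intro y hy
      exact (hderiv y hy).differentiableAt.differentiableWithinAt
    · rw [interior_Icc]
      intro y hy
      rw [(hderiv y hy).deriv]
      have := log_lb_up (le_of_lt hy.1) (le_of_lt hy.2)
      linarith
  have h00 : F 0 = 0 := by simp [hF]
  have := hmono (Set.mem_Icc.2 ⟨le_refl 0, by norm_num⟩) (Set.mem_Icc.2 ⟨h0, h1⟩) h0
  rw [h00] at this
  simp only [hF] at this
  linarith

lemma log_ineq_down {x : ℝ} (h0 : 0 ≤ x) (h1 : x ≤ 1/2) :
    -x + x^2/3 ≤ (1-x) * Real.log (1-x) := by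
  set G : ℝ → ℝ := fun y => (1-y) * Real.log (1-y) + y - y^2/3 with hG
  have hderiv : ∀ y ∈ Set.Ioo (0:ℝ) (1/2), HasDerivAt G (-Real.log (1-y) - 2*y/3) y := by
    intro y hy
    have hy1 : (1:ℝ) - y ≠ 0 := by cases hy; intro h; linarith
    have h1' : HasDerivAt (fun z : ℝ => 1 - z) (-1) y := by
      simpa using (hasDerivAt_id y).const_sub 1
    have hlog : HasDerivAt (fun z : ℝ => Real.log (1-z)) (-1/(1-y)) y := by
      simpa using h1'.log hy1
    have hmul : HasDerivAt (fun z : ℝ => (1-z) * Real.log (1-z))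
        ((-1) * Real.log (1-y) + (1-y) * (-1/(1-y))) y := h1'.mul hlog
    have hq : HasDerivAt (fun z : ℝ => z^2/3) (2*y/3) y := by
      have := (hasDerivAt_pow 2 y).div_const 3
      simpa using this.congr_deriv (by ring)
    have := (hmul.add (hasDerivAt_id y)).sub hq
    have hP : (1-y) * (-1/(1-y)) = -1 := by rw [mul_div_assoc', mul_neg_one, neg_div, div_self hy1]
    convert this using 1
    · rfl
    · rfl
    · rfl
    · linear_combination -hP
  have hmono : MonotoneOn G (Set.Icc (0:ℝ) (1/2)) := by
    apply monotoneOn_of_deriv_nonneg (convex_Icc _ _)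
    · apply ContinuousOn.sub
      apply ContinuousOn.add
      · apply ContinuousOn.mul (by fun_prop)
        apply Real.continuousOn_log.comp (by fun_prop)
        intro y hy
        simp only [Set.mem_Icc] at hy
        intro h
        simp only [Set.mem_singleton_iff] at h
        linarith [hy.2]
      · fun_prop
      · fun_prop
    · rw [interior_Icc]
      intro y hy
      exact (hderiv y hy).differentiableAt.differentiableWithinAt
    · rw [interior_Icc]
      intro y hy
      rw [(hderiv y hy).deriv]
      have hpos : (0:ℝ) < 1 - y := by cases hy; linarith
      have := Real.log_le_sub_one_of_pos hpos
      cases hy; linarith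
  have h00 : G 0 = 0 := by simp [hG]
  have := hmono (Set.mem_Icc.2 ⟨le_refl 0, by norm_num⟩) (Set.mem_Icc.2 ⟨h0, h1⟩) h0
  rw [h00] at this
  simp only [hG] at this
  linarith

lemma tail_bound {α : Type*} [Fintype α] (p : Finset α → Prop) (f : α → ℕ) (d k : ℕ) (t c : ℝ)
    (hd : 0 < d) (hn : 0 < Fintype.card α) (hk : k ≤ Fintype.card α) (hf : ∀ x, f x ≤ d)
    (hind : ∀ S, S ∈ powersetCard k (Finset.univ : Finset α) → p S →
       1 ≤ Real.exp (t * (∑ x ∈ S, (f x:ℝ)) - c)) :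
    (((powersetCard k (Finset.univ : Finset α)).filter p).card : ℝ)
      ≤ ((Fintype.card α).choose k : ℝ) *
        Real.exp ((k:ℝ) * (∑ x : α, (f x:ℝ)) / (Fintype.card α : ℝ) / d * (Real.exp (t*(d:ℝ)) - 1) - c) := by
  classical
  set n := Fintype.card α with hn'
  set P := powersetCard k (Finset.univ : Finset α) with hP
  set W : Finset α → ℝ := fun S => ∑ x ∈ S, (f x:ℝ) with hW
  have hd0 : ((d:ℝ)) ≠ 0 := by positivity
  have hn0 : ((n:ℝ)) ≠ 0 := by positivity
  -- step 1 : count ≤ sum of exponentials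
  have step1 : ((P.filter p).card : ℝ) ≤ ∑ S ∈ P, Real.exp (t * W S - c) := by
    calc ((P.filter p).card : ℝ) = ∑ S ∈ P.filter p, (1:ℝ) := by simp
      _ ≤ ∑ S ∈ P.filter p, Real.exp (t * W S - c) := by
          refine Finset.sum_le_sum fun S hS => ?_
          obtain ⟨hSP, hpS⟩ := Finset.mem_filter.1 hS
          exact hind S hSP hpS
      _ ≤ ∑ S ∈ P, Real.exp (t * W S - c) := by
          refine Finset.sum_le_sum_of_subset_of_nonneg (Finset.filter_subset _ _) ?_
          exact fun S _ _ => (Real.exp_pos _).le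
  -- step 2 : mgf
  have hexp : ∀ S : Finset α, Real.exp (t * W S) = ∏ x ∈ S, Real.exp (t * (f x:ℝ)) := by
    intro S
    rw [hW, Finset.mul_sum, Real.exp_sum]
  have hmac := maclaurin (Finset.univ : Finset α) (fun x => Real.exp (t * (f x:ℝ)))
      (fun x _ => (Real.exp_pos _).le) k (by simpa using hk)
  rw [Finset.card_univ, ← hn'] at hmac
  set A : ℝ := ∑ x : α, Real.exp (t * (f x:ℝ)) with hA
  have hApos : 0 < A := Finset.sum_pos (fun x _ => Real.exp_pos _)
    (Finset.univ_nonempty_iff.2 (by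
      rcases Fintype.card_pos_iff.1 hn with ⟨x⟩
      exact ⟨x⟩))
  have step2 : ∑ S ∈ P, Real.exp (t * W S) ≤ ((n.choose k : ℝ)) * (A / n)^k := by
    have h2 : ∑ S ∈ P, Real.exp (t * W S) = ∑ S ∈ P, ∏ x ∈ S, Real.exp (t * (f x:ℝ)) :=
      Finset.sum_congr rfl fun S _ => hexp S
    rw [h2, div_pow, ← mul_div_assoc, le_div_iff₀ (by positivity)]
    calc (∑ S ∈ P, ∏ x ∈ S, Real.exp (t * (f x:ℝ))) * (n:ℝ)^k
        = (n : ℝ)^k * ∑ S ∈ P, ∏ x ∈ S, Real.exp (t * (f x:ℝ)) := by ring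
      _ ≤ (n.choose k : ℝ) * A^k := hmac
  -- step 3 : bound A/n
  have conv : ∀ x : α, Real.exp (t * (f x:ℝ)) ≤ 1 + (f x:ℝ)/d * (Real.exp (t*(d:ℝ)) - 1) := by
    intro x
    have hθ0 : (0:ℝ) ≤ (f x:ℝ)/d := by positivity
    have hθ1 : ((f x:ℝ)/d) ≤ 1 := by
      rw [div_le_one (by exact_mod_cast hd)]
      exact_mod_cast hf x
    have h := convexOn_exp.2 (Set.mem_univ (t*(d:ℝ))) (Set.mem_univ (0:ℝ)) hθ0
      (by linarith : (0:ℝ) ≤ 1 - (f x:ℝ)/d) (by ring)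
    simp only [smul_eq_mul, mul_zero, add_zero, Real.exp_zero, mul_one] at h
    have harg : (f x:ℝ)/d * (t*(d:ℝ)) = t * (f x:ℝ) := by field_simp
    rw [harg] at h
    linarith
  have step3 : A / n ≤ Real.exp ((∑ x : α, (f x:ℝ))/n/d * (Real.exp (t*(d:ℝ)) - 1)) := by
    have hsum : A ≤ (n:ℝ) + (∑ x : α, (f x:ℝ))/d * (Real.exp (t*(d:ℝ)) - 1) := by
      calc A ≤ ∑ x : α, (1 + (f x:ℝ)/d * (Real.exp (t*(d:ℝ)) - 1)) :=
            Finset.sum_le_sum fun x _ => conv x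
        _ = (n:ℝ) + (∑ x : α, (f x:ℝ))/d * (Real.exp (t*(d:ℝ)) - 1) := by
            rw [Finset.sum_add_distrib, Finset.sum_const, Finset.card_univ, ← hn']
            simp only [nsmul_eq_mul, mul_one]
            rw [Finset.sum_div, Finset.sum_mul]
    have h1 : A / n ≤ 1 + (∑ x : α, (f x:ℝ))/n/d * (Real.exp (t*(d:ℝ)) - 1) := by
      rw [div_le_iff₀ (by positivity : (0:ℝ) < (n:ℝ))]
      calc A ≤ (n:ℝ) + (∑ x : α, (f x:ℝ))/d * (Real.exp (t*(d:ℝ)) - 1) := hsum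
        _ = (1 + (∑ x : α, (f x:ℝ))/n/d * (Real.exp (t*(d:ℝ)) - 1)) * n := by
            field_simp
    refine h1.trans ?_
    have := Real.add_one_le_exp ((∑ x : α, (f x:ℝ))/n/d * (Real.exp (t*(d:ℝ)) - 1))
    linarith
  -- combine
  have hAn0 : (0:ℝ) ≤ A / n := by positivity
  have step4 : (A/n)^k ≤ Real.exp ((k:ℝ) * (∑ x : α, (f x:ℝ))/n/d * (Real.exp (t*(d:ℝ)) - 1)) := by
    calc (A/n)^k ≤ (Real.exp ((∑ x : α, (f x:ℝ))/n/d * (Real.exp (t*(d:ℝ)) - 1)))^k :=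
          pow_le_pow_left₀ hAn0 step3 k
      _ = Real.exp ((k:ℝ) * ((∑ x : α, (f x:ℝ))/n/d * (Real.exp (t*(d:ℝ)) - 1))) := by
          rw [← Real.exp_nat_mul]
      _ = Real.exp ((k:ℝ) * (∑ x : α, (f x:ℝ))/n/d * (Real.exp (t*(d:ℝ)) - 1)) := by
          ring_nf
  calc ((P.filter p).card : ℝ) ≤ ∑ S ∈ P, Real.exp (t * W S - c) := step1
    _ = Real.exp (-c) * ∑ S ∈ P, Real.exp (t * W S) := by
        rw [Finset.mul_sum]
        exact Finset.sum_congr rfl fun S _ => by rw [← Real.exp_add]; ring_nf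
    _ ≤ Real.exp (-c) * ((n.choose k : ℝ) * (A/n)^k) := by
        refine mul_le_mul_of_nonneg_left step2 (Real.exp_pos _).le
    _ ≤ Real.exp (-c) * ((n.choose k : ℝ) *
          Real.exp ((k:ℝ) * (∑ x : α, (f x:ℝ))/n/d * (Real.exp (t*(d:ℝ)) - 1))) := by
        refine mul_le_mul_of_nonneg_left (mul_le_mul_of_nonneg_left step4 (by positivity)) (Real.exp_pos _).le
    _ = (n.choose k : ℝ) *
          Real.exp ((k:ℝ) * (∑ x : α, (f x:ℝ))/n/d * (Real.exp (t*(d:ℝ)) - 1) - c) := by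
        rw [Real.exp_sub, Real.exp_neg]
        ring

end AuxEdgeConc

/-- **Concentration of the number of edges incident to a random subset.**  Let `(X, Y, E)`
be a bipartite graph with all degrees at most `d`, let `k ≤ |X|` and `s = k·|E|/|X|`.  For
any `0 ≤ γ < 1/2`, the probability (over a uniformly random `k`-subset `S` of `X`,
expressed by counting) that `|E(S, Y)| ∉ [(1−γ)s, (1+γ)s]` is at most
`2·exp(−γ²·s/(3·d))`. -/
theorem edge_concentration_one_sided {X Y : Type*} [Fintype X] [Fintype Y]
    (E : Finset (X × Y)) (d : ℕ)
    (hdX : ∀ x : X, (E.filter fun e => e.1 = x).card ≤ d)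
    (hdY : ∀ y : Y, (E.filter fun e => e.2 = y).card ≤ d)
    (k : ℕ) (hk : k ≤ Fintype.card X)
    (s : ℝ) (hs : s = (k : ℝ) * (E.card : ℝ) / (Fintype.card X : ℝ))
    (γ : ℝ) (hγ0 : 0 ≤ γ) (hγ : γ < 1 / 2) :
    (((Finset.powersetCard k (Finset.univ : Finset X)).filter
          fun S : Finset X =>
            ¬((1 - γ) * s ≤ (edgeCount E S Finset.univ : ℝ) ∧
                (edgeCount E S Finset.univ : ℝ) ≤ (1 + γ) * s)).card : ℝ) /
        ((Fintype.card X).choose k : ℝ) ≤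
      2 * Real.exp (-(γ ^ 2 * s) / (3 * (d : ℝ))) := by
  have hC : (0:ℝ) < ((Fintype.card X).choose k : ℝ) := by
    exact_mod_cast Nat.choose_pos hk
  set Z := Real.exp (-(γ ^ 2 * s) / (3 * (d : ℝ))) with hZ
  have hZpos : 0 < Z := Real.exp_pos _
  set f : X → ℕ := fun x => (E.filter fun e => e.1 = x).card with hfdef
  -- edgeCount as a sum of degrees
  have hW : ∀ S : Finset X, (edgeCount E S Finset.univ : ℝ) = ∑ x ∈ S, (f x : ℝ) := by
    intro S
    have h1 : edgeCount E S Finset.univ = (E.filter fun e => e.1 ∈ S).card := by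
      unfold edgeCount
      congr 1
      apply Finset.filter_congr
      intro e _
      simp
    have h2 : (E.filter fun e => e.1 ∈ S).card = ∑ x ∈ S, f x := by
      rw [Finset.card_eq_sum_card_fiberwise
        (f := fun e : X × Y => e.1) (s := E.filter fun e => e.1 ∈ S) (t := S)
        (fun e he => (Finset.mem_filter.1 he).2)]
      refine Finset.sum_congr rfl fun x hx => ?_
      rw [Finset.filter_filter]
      congr 1
      apply Finset.filter_congr
      intro e _
      constructor
      · exact fun h => h.2
      · intro h
        refine ⟨?_, h⟩
        show e.1 ∈ S
        rw [h]
        exact hx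
    rw [h1, h2]
    push_cast
    rfl
  have hEf : (∑ x : X, f x) = E.card := by
    symm
    exact Finset.card_eq_sum_card_fiberwise (fun e _ => Finset.mem_univ e.1)
  by_cases htriv : 1 ≤ 2 * Z
  · -- trivial case: probability ≤ 1 ≤ RHS
    rw [div_le_iff₀ hC]
    have hcard : (((Finset.powersetCard k (Finset.univ : Finset X)).filter
          fun S : Finset X =>
            ¬((1 - γ) * s ≤ (edgeCount E S Finset.univ : ℝ) ∧
                (edgeCount E S Finset.univ : ℝ) ≤ (1 + γ) * s)).card : ℝ)
        ≤ ((Fintype.card X).choose k : ℝ) := by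
      have := Finset.card_le_card (Finset.filter_subset
        (fun S : Finset X =>
            ¬((1 - γ) * s ≤ (edgeCount E S Finset.univ : ℝ) ∧
                (edgeCount E S Finset.univ : ℝ) ≤ (1 + γ) * s))
        (Finset.powersetCard k (Finset.univ : Finset X)))
      rw [Finset.card_powersetCard, Finset.card_univ] at this
      exact_mod_cast this
    calc (((Finset.powersetCard k (Finset.univ : Finset X)).filter
          fun S : Finset X =>
            ¬((1 - γ) * s ≤ (edgeCount E S Finset.univ : ℝ) ∧
                (edgeCount E S Finset.univ : ℝ) ≤ (1 + γ) * s)).card : ℝ)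
        ≤ ((Fintype.card X).choose k : ℝ) := hcard
      _ = 1 * ((Fintype.card X).choose k : ℝ) := by ring
      _ ≤ (2 * Z) * ((Fintype.card X).choose k : ℝ) := by
          exact mul_le_mul_of_nonneg_right htriv (le_of_lt hC)
  · push_neg at htriv
    -- derive positivity facts
    have hargneg : -(γ ^ 2 * s) / (3 * (d:ℝ)) < 0 := by
      by_contra h
      push_neg at h
      have h1 : (1:ℝ) ≤ Z := by
        rw [hZ]
        calc (1:ℝ) = Real.exp 0 := by simp
          _ ≤ Real.exp (-(γ ^ 2 * s) / (3 * (d:ℝ))) := Real.exp_le_exp.2 h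
      linarith
    have hpos : 0 < (γ ^ 2 * s) / (3 * (d:ℝ)) := by
      rw [neg_div] at hargneg
      linarith
    have hd : 0 < d := by
      rcases Nat.eq_zero_or_pos d with h0 | h
      · rw [h0] at hpos
        norm_num at hpos
      · exact h
    have hd0 : ((d:ℝ)) ≠ 0 := by positivity
    have h3d : (0:ℝ) < 3 * (d:ℝ) := by positivity
    have hγs : 0 < γ ^ 2 * s := by
      have := mul_pos hpos h3d
      rwa [div_mul_cancel₀ _ (ne_of_gt h3d)] at this
    have hγpos : 0 < γ := by
      rcases lt_or_eq_of_le hγ0 with h | h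
      · exact h
      · exfalso; rw [← h] at hγs; simp at hγs
    have hspos : 0 < s := by nlinarith [sq_nonneg γ]
    have hn0 : 0 < Fintype.card X := by
      rcases Nat.eq_zero_or_pos (Fintype.card X) with h0 | h
      · exfalso
        rw [hs, h0] at hspos
        norm_num at hspos
      · exact h
    have hγ1 : γ ≤ 1/2 := le_of_lt hγ
    have h1γ : (0:ℝ) < 1 - γ := by linarith
    have h1γ' : (0:ℝ) < 1 + γ := by linarith
    -- the mean
    have hμ : (k:ℝ) * (∑ x : X, (f x:ℝ)) / (Fintype.card X : ℝ) / (d:ℝ) = s / d := by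
      have hcast : (∑ x : X, (f x:ℝ)) = (E.card:ℝ) := by exact_mod_cast hEf
      rw [hs, hcast]
    -- lower tail
    set t₁ : ℝ := Real.log (1 - γ) / d with ht₁
    set c₁ : ℝ := t₁ * ((1 - γ) * s) with hc₁
    have ht₁np : t₁ ≤ 0 :=
      div_nonpos_of_nonpos_of_nonneg (Real.log_nonpos (by linarith) (by linarith)) (by positivity)
    have tail1 := tail_bound (α := X)
      (fun S => ¬((1 - γ) * s ≤ (edgeCount E S Finset.univ : ℝ))) f d k t₁ c₁
      hd hn0 hk hdX ?hind1
    case hind1 =>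
      intro S _ hpS
      push_neg at hpS
      have hWS := hW S
      have hle : (∑ x ∈ S, (f x:ℝ)) ≤ (1 - γ) * s := by rw [← hWS]; linarith
      have := mul_le_mul_of_nonpos_left hle ht₁np
      have harg : 0 ≤ t₁ * (∑ x ∈ S, (f x:ℝ)) - c₁ := by rw [hc₁]; linarith
      linarith [Real.add_one_le_exp (t₁ * (∑ x ∈ S, (f x:ℝ)) - c₁)]
    have hE1 : Real.exp (t₁ * (d:ℝ)) = 1 - γ := by
      rw [ht₁, div_mul_cancel₀ _ hd0, Real.exp_log h1γ]
    have bnd1 : (k:ℝ) * (∑ x : X, (f x:ℝ)) / (Fintype.card X : ℝ) / (d:ℝ) *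
        (Real.exp (t₁ * (d:ℝ)) - 1) - c₁ ≤ -(γ ^ 2 * s) / (3 * (d:ℝ)) := by
      rw [hμ, hE1, hc₁, ht₁]
      have hlog := log_ineq_down hγ0 hγ1
      have base : -γ - (1 - γ) * Real.log (1 - γ) ≤ -(γ ^ 2) / 3 := by linarith
      have hsd : (0:ℝ) ≤ s / (d:ℝ) := by positivity
      have hb := mul_le_mul_of_nonneg_left base hsd
      calc s / (d:ℝ) * ((1 - γ) - 1) - Real.log (1 - γ) / (d:ℝ) * ((1 - γ) * s)
          = s / (d:ℝ) * (-γ - (1 - γ) * Real.log (1 - γ)) := by ring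
        _ ≤ s / (d:ℝ) * (-(γ ^ 2) / 3) := hb
        _ = -(γ ^ 2 * s) / (3 * (d:ℝ)) := by
            field_simp
    have tail1' : ((((Finset.powersetCard k (Finset.univ : Finset X)).filter
          fun S : Finset X => ¬((1 - γ) * s ≤ (edgeCount E S Finset.univ : ℝ))).card : ℝ))
        ≤ ((Fintype.card X).choose k : ℝ) * Z := by
      have h := tail1.trans
        (mul_le_mul_of_nonneg_left (Real.exp_le_exp.2 bnd1) (le_of_lt hC))
      convert h using 4 <;> rfl
    -- upper tail
    set t₂ : ℝ := Real.log (1 + γ) / d with ht₂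
    set c₂ : ℝ := t₂ * ((1 + γ) * s) with hc₂
    have ht₂nn : 0 ≤ t₂ := div_nonneg (Real.log_nonneg (by linarith)) (by positivity)
    have tail2 := tail_bound (α := X)
      (fun S => ¬((edgeCount E S Finset.univ : ℝ) ≤ (1 + γ) * s)) f d k t₂ c₂
      hd hn0 hk hdX ?hind2
    case hind2 =>
      intro S _ hpS
      push_neg at hpS
      have hWS := hW S
      have hle : (1 + γ) * s ≤ (∑ x ∈ S, (f x:ℝ)) := by rw [← hWS]; linarith
      have := mul_le_mul_of_nonneg_left hle ht₂nn
      have harg : 0 ≤ t₂ * (∑ x ∈ S, (f x:ℝ)) - c₂ := by rw [hc₂]; linarith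
      linarith [Real.add_one_le_exp (t₂ * (∑ x ∈ S, (f x:ℝ)) - c₂)]
    have hE2 : Real.exp (t₂ * (d:ℝ)) = 1 + γ := by
      rw [ht₂, div_mul_cancel₀ _ hd0, Real.exp_log h1γ']
    have bnd2 : (k:ℝ) * (∑ x : X, (f x:ℝ)) / (Fintype.card X : ℝ) / (d:ℝ) *
        (Real.exp (t₂ * (d:ℝ)) - 1) - c₂ ≤ -(γ ^ 2 * s) / (3 * (d:ℝ)) := by
      rw [hμ, hE2, hc₂, ht₂]
      have hlog := log_ineq_up hγ0 hγ1
      have base : γ - (1 + γ) * Real.log (1 + γ) ≤ -(γ ^ 2) / 3 := by linarith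
      have hsd : (0:ℝ) ≤ s / (d:ℝ) := by positivity
      have hb := mul_le_mul_of_nonneg_left base hsd
      calc s / (d:ℝ) * ((1 + γ) - 1) - Real.log (1 + γ) / (d:ℝ) * ((1 + γ) * s)
          = s / (d:ℝ) * (γ - (1 + γ) * Real.log (1 + γ)) := by ring
        _ ≤ s / (d:ℝ) * (-(γ ^ 2) / 3) := hb
        _ = -(γ ^ 2 * s) / (3 * (d:ℝ)) := by
            field_simp
    have tail2' : ((((Finset.powersetCard k (Finset.univ : Finset X)).filter
          fun S : Finset X => ¬((edgeCount E S Finset.univ : ℝ) ≤ (1 + γ) * s)).card : ℝ))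
        ≤ ((Fintype.card X).choose k : ℝ) * Z := by
      have h := tail2.trans
        (mul_le_mul_of_nonneg_left (Real.exp_le_exp.2 bnd2) (le_of_lt hC))
      convert h using 4 <;> rfl
    -- union bound
    have hsub : ((Finset.powersetCard k (Finset.univ : Finset X)).filter
          fun S : Finset X =>
            ¬((1 - γ) * s ≤ (edgeCount E S Finset.univ : ℝ) ∧
                (edgeCount E S Finset.univ : ℝ) ≤ (1 + γ) * s))
        ⊆ ((Finset.powersetCard k (Finset.univ : Finset X)).filter
            fun S : Finset X => ¬((1 - γ) * s ≤ (edgeCount E S Finset.univ : ℝ)))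
          ∪ ((Finset.powersetCard k (Finset.univ : Finset X)).filter
            fun S : Finset X => ¬((edgeCount E S Finset.univ : ℝ) ≤ (1 + γ) * s)) := by
      intro S hS
      rw [Finset.mem_filter] at hS
      rw [Finset.mem_union, Finset.mem_filter, Finset.mem_filter]
      tauto
    have hcards : (((Finset.powersetCard k (Finset.univ : Finset X)).filter
          fun S : Finset X =>
            ¬((1 - γ) * s ≤ (edgeCount E S Finset.univ : ℝ) ∧
                (edgeCount E S Finset.univ : ℝ) ≤ (1 + γ) * s)).card : ℝ)
        ≤ (((Finset.powersetCard k (Finset.univ : Finset X)).filter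
            fun S : Finset X => ¬((1 - γ) * s ≤ (edgeCount E S Finset.univ : ℝ))).card : ℝ)
          + (((Finset.powersetCard k (Finset.univ : Finset X)).filter
            fun S : Finset X => ¬((edgeCount E S Finset.univ : ℝ) ≤ (1 + γ) * s)).card : ℝ) := by
      have h1 := Finset.card_le_card hsub
      have h2 := Finset.card_union_le
        ((Finset.powersetCard k (Finset.univ : Finset X)).filter
            fun S : Finset X => ¬((1 - γ) * s ≤ (edgeCount E S Finset.univ : ℝ)))
        ((Finset.powersetCard k (Finset.univ : Finset X)).filter
            fun S : Finset X => ¬((edgeCount E S Finset.univ : ℝ) ≤ (1 + γ) * s))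
      exact_mod_cast le_trans h1 h2
    rw [div_le_iff₀ hC]
    calc (((Finset.powersetCard k (Finset.univ : Finset X)).filter
          fun S : Finset X =>
            ¬((1 - γ) * s ≤ (edgeCount E S Finset.univ : ℝ) ∧
                (edgeCount E S Finset.univ : ℝ) ≤ (1 + γ) * s)).card : ℝ)
        ≤ (((Finset.powersetCard k (Finset.univ : Finset X)).filter
            fun S : Finset X => ¬((1 - γ) * s ≤ (edgeCount E S Finset.univ : ℝ))).card : ℝ)
          + (((Finset.powersetCard k (Finset.univ : Finset X)).filter
            fun S : Finset X => ¬((edgeCount E S Finset.univ : ℝ) ≤ (1 + γ) * s)).card : ℝ) := hcards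
      _ ≤ ((Fintype.card X).choose k : ℝ) * Z + ((Fintype.card X).choose k : ℝ) * Z :=
          add_le_add tail1' tail2'
      _ = 2 * Z * ((Fintype.card X).choose k : ℝ) := by ring
end
end

section
/- Let V be a finite variable set, Σ a finite alphabet, r a positive integer, and let {U_{(S,φ_S)}} be a family of vectors in a real inner product space, indexed by subsets S ⊆ V with |S| ≤ r and assignments φ_S ∈ Σ^S, satisfying: (i) ⟨U_{(S_1,φ_1)}, U_{(S_2,φ_2)}⟩ ≥ 0 for all S_1, S_2, φ_1, φ_2; (ii) ⟨U_{(S_1,φ_1)}, U_{(S_2,φ_2)}⟩ = ⟨U_{(S_3,φ_3)}, U_{(S_4,φ_4)}⟩ whenever S_1 ∪ S_2 = S_3 ∪ S_4, the pairs φ_1, φ_2 and φ_3, φ_4 are each consistent, and φ_1∘φ_2 = φ_3∘φ_4; (iii) ⟨U_{(S_1,φ_1)}, U_{(S_2,φ_2)}⟩ = 0 whenever φ_1 and φ_2 are inconsistent; (iv) Σ_{σ∈Σ} ‖U_{({x}, x→σ)}‖^2 = 1 for every x ∈ V; and (v) ‖U_{(∅,∅)}‖ = 1. Then for every S ⊆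 V with |S| ≤ r, Σ_{φ_S ∈ Σ^S} ‖U_{(S,φ_S)}‖^2 = 1. -/
open Finset
open scoped RealInnerProductSpace

attribute [local instance] Classical.propDecidable

noncomputable section

/-- **Squared norms of an `r`-level Lasserre solution sum to one on every set.**
The vectors `U S φ` are indexed by a set `S ⊆ V` of at most `r` variables and an
assignment; assignments are represented by full functions `V → A`, with `U S` depending
only on the values on `S`.  Under the Lasserre constraints (non-negative inner products;
inner products depending only on the combined assignments on unions; orthogonality of
inconsistent assignments; squared norms at singletons summing to one; the empty vector
being a unit vector), for every `S` with `|S| ≤ r` the squared norms of `U S ·` over all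
assignments of `S` sum to `1`. -/
theorem lasserre_sq_norm_sum_eq_one {V A H : Type*} [Fintype V] [Fintype A] [Nonempty A]
    [NormedAddCommGroup H] [InnerProductSpace ℝ H] (r : ℕ) (hr : 0 < r)
    (U : Finset V → (V → A) → H)
    (hwell : ∀ S : Finset V, S.card ≤ r → ∀ φ ψ : V → A,
      (∀ x ∈ S, φ x = ψ x) → U S φ = U S ψ)
    (hnonneg : ∀ S₁ S₂ : Finset V, S₁.card ≤ r → S₂.card ≤ r → ∀ φ₁ φ₂ : V → A,
      (0 : ℝ) ≤ ⟪U S₁ φ₁, U S₂ φ₂⟫)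
    (hunion : ∀ S₁ S₂ S₃ S₄ : Finset V,
      S₁.card ≤ r → S₂.card ≤ r → S₃.card ≤ r → S₄.card ≤ r →
      ∀ φ₁ φ₂ φ₃ φ₄ : V → A, S₁ ∪ S₂ = S₃ ∪ S₄ →
      (∀ x ∈ S₁ ∩ S₂, φ₁ x = φ₂ x) → (∀ x ∈ S₃ ∩ S₄, φ₃ x = φ₄ x) →
      (∀ x ∈ S₁ ∪ S₂, (if x ∈ S₁ then φ₁ x else φ₂ x) = (if x ∈ S₃ then φ₃ x else φ₄ x)) →
      ⟪U S₁ φ₁, U S₂ φ₂⟫ = ⟪U S₃ φ₃, U S₄ φ₄⟫)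
    (hincons : ∀ S₁ S₂ : Finset V, S₁.card ≤ r → S₂.card ≤ r → ∀ φ₁ φ₂ : V → A,
      (∃ x, x ∈ S₁ ∧ x ∈ S₂ ∧ φ₁ x ≠ φ₂ x) → ⟪U S₁ φ₁, U S₂ φ₂⟫ = 0)
    (hsingle : ∀ x : V, ∑ σ : A, ‖U {x} (fun _ => σ)‖ ^ 2 = 1)
    (hempty : ∀ φ : V → A, ‖U ∅ φ‖ = 1) :
    ∀ S : Finset V, S.card ≤ r →
      ∑ g : {x // x ∈ S} → A,
        ‖U S (fun x => if h : x ∈ S then g ⟨x, h⟩ else Classical.arbitrary A)‖ ^ 2 = 1 := by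
  classical
  -- (a) squared norm equals inner product with the empty vector
  have ha : ∀ S : Finset V, S.card ≤ r → ∀ φ : V → A,
      ‖U S φ‖ ^ 2 = ⟪U S φ, U ∅ φ⟫ := by
    intro S hS φ
    rw [← real_inner_self_eq_norm_sq]
    refine hunion S S S ∅ hS hS hS (by simp) φ φ φ φ (by simp) (fun y _ => rfl)
      (fun y _ => rfl) (fun y _ => rfl)
  -- the empty vector does not depend on the assignment
  have hconst : ∀ φ ψ : V → A, U ∅ φ = U ∅ ψ := fun φ ψ =>
    hwell ∅ (by simp) φ ψ (by simp)
  -- (b) the empty vector decomposes as the sum of singleton vectors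
  have hvec : ∀ (x : V) (ψ : V → A),
      U ∅ ψ = ∑ σ : A, U {x} (fun _ => σ) := by
    intro x ψ
    have hx1 : ({x} : Finset V).card ≤ r := by simpa using Nat.succ_le_of_lt hr
    have hsing : ∀ σ : A, ⟪U ∅ ψ, U {x} (fun _ => σ)⟫ = ‖U {x} (fun _ => σ)‖ ^ 2 := by
      intro σ
      rw [real_inner_comm, hconst ψ (fun _ => σ),
        ← ha {x} hx1 (fun _ => σ)]
    have hcross : ⟪U ∅ ψ, ∑ σ : A, U {x} (fun _ => σ)⟫ = 1 := by
      rw [inner_sum]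
      simp_rw [hsing]
      exact hsingle x
    have hbb : ‖∑ σ : A, U {x} (fun _ => σ)‖ ^ 2 = 1 := by
      rw [← real_inner_self_eq_norm_sq, inner_sum]
      have : ∀ σ : A, ⟪∑ τ : A, U {x} (fun _ => τ), U {x} (fun _ => σ)⟫
          = ‖U {x} (fun _ => σ)‖ ^ 2 := by
        intro σ
        rw [sum_inner, Finset.sum_eq_single σ]
        · rw [real_inner_self_eq_norm_sq]
        · intro τ _ hτ
          exact hincons {x} {x} hx1 hx1 _ _ ⟨x, by simp, by simp, hτ⟩
        · intro h; exact absurd (Finset.mem_univ σ) h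
      simp_rw [this]
      exact hsingle x
    have h0 : ‖U ∅ ψ - ∑ σ : A, U {x} (fun _ => σ)‖ ^ 2 = 0 := by
      rw [norm_sub_sq_real, hcross, hbb, hempty]
      ring
    have := (pow_eq_zero_iff (two_ne_zero)).mp h0
    rw [norm_eq_zero, sub_eq_zero] at this
    exact this
  -- (c) splitting lemma: the squared norm over `T` splits over extensions to `insert x T`
  have hsplit : ∀ (x : V) (T : Finset V), x ∉ T → (insert x T).card ≤ r →
      ∀ ψ : V → A,
      ‖U T ψ‖ ^ 2 = ∑ σ : A, ‖U (insert x T) (Function.update ψ x σ)‖ ^ 2 := by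
    intro x T hxT hST ψ
    have hT : T.card ≤ r := (Finset.card_le_card (Finset.subset_insert x T)).trans hST
    have hx1 : ({x} : Finset V).card ≤ r := by simpa using Nat.succ_le_of_lt hr
    rw [ha T hT ψ, hvec x ψ, inner_sum]
    refine Finset.sum_congr rfl fun σ _ => ?_
    rw [← real_inner_self_eq_norm_sq]
    refine hunion T {x} (insert x T) (insert x T) hT hx1 hST hST
      ψ (fun _ => σ) (Function.update ψ x σ) (Function.update ψ x σ)
      (by ext y; simp [or_comm]) ?_ (fun y _ => rfl) ?_
    · intro y hy
      rw [Finset.mem_inter, Finset.mem_singleton] at hy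
      exact absurd (hy.2 ▸ hy.1) hxT
    · intro y hy
      rw [Finset.mem_union, Finset.mem_singleton] at hy
      by_cases hyT : y ∈ T
      · have hyx : y ≠ x := fun h => hxT (h ▸ hyT)
        simp [hyT, Function.update_of_ne hyx, Finset.mem_insert, hyx]
      · have hyx : y = x := hy.resolve_left hyT
        subst hyx
        simp [hyT]
  -- main induction
  intro S
  induction S using Finset.induction_on with
  | empty =>
    intro _
    haveI : IsEmpty {y // y ∈ (∅ : Finset V)} :=
      ⟨fun y => absurd y.2 (Finset.notMem_empty _)⟩
    rw [Fintype.sum_unique, hempty]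
    norm_num
  | @insert x T hxT ih =>
    intro hS
    have hT : T.card ≤ r := (Finset.card_le_card (Finset.subset_insert x T)).trans hS
    -- reindex assignments of `insert x T` by pairs
    let e : ({y // y ∈ insert x T} → A) ≃ ({y // y ∈ T} → A) × A :=
      { toFun := fun g => (fun y => g ⟨y, Finset.mem_insert_of_mem y.2⟩,
          g ⟨x, Finset.mem_insert_self x T⟩)
        invFun := fun p y => if h : (y : V) ∈ T then p.1 ⟨y, h⟩ else p.2
        left_inv := by
          intro g
          funext y
          by_cases h : (y : V) ∈ T
          · simp [h]
          · have hyx : (y : V) = x := (Finset.mem_insert.mp y.2).resolve_right h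
            simp only [h, dif_neg, not_false_iff]
            congr 1
            exact Subtype.ext hyx.symm
        right_inv := by
          intro p
          ext y
          · simp [y.2]
          · simp [hxT] }
    have extdef : ∀ p : ({y // y ∈ T} → A) × A,
        U (insert x T) (fun z => if h : z ∈ insert x T then (e.symm p) ⟨z, h⟩
            else Classical.arbitrary A)
        = U (insert x T) (Function.update
            (fun z => if h : z ∈ T then p.1 ⟨z, h⟩ else Classical.arbitrary A) x p.2) := by
      intro p
      refine hwell (insert x T) hS _ _ ?_
      intro y hy
      rcases Finset.mem_insert.mp hy with h | h
      · subst h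
        have hyT : y ∉ T := hxT
        simp [e, hyT, Finset.mem_insert_self]
      · have hyx : y ≠ x := fun hh => hxT (hh ▸ h)
        simp [e, Finset.mem_insert_of_mem h, h, Function.update_of_ne hyx]
    calc ∑ g : {y // y ∈ insert x T} → A,
          ‖U (insert x T) (fun z => if h : z ∈ insert x T then g ⟨z, h⟩
              else Classical.arbitrary A)‖ ^ 2
        = ∑ p : ({y // y ∈ T} → A) × A,
          ‖U (insert x T) (fun z => if h : z ∈ insert x T then (e.symm p) ⟨z, h⟩
              else Classical.arbitrary A)‖ ^ 2 := by
          refine (Fintype.sum_equiv e _ _ fun g => ?_).symm.symm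
          rw [e.symm_apply_apply]
      _ = ∑ h : {y // y ∈ T} → A, ∑ σ : A,
          ‖U (insert x T) (Function.update
            (fun z => if hz : z ∈ T then h ⟨z, hz⟩ else Classical.arbitrary A) x σ)‖ ^ 2 := by
          simp_rw [extdef]
          rw [Fintype.sum_prod_type]
      _ = ∑ h : {y // y ∈ T} → A,
          ‖U T (fun z => if hz : z ∈ T then h ⟨z, hz⟩ else Classical.arbitrary A)‖ ^ 2 := by
          refine Finset.sum_congr rfl fun h _ => ?_
          rw [hsplit x T hxT hS]
      _ = 1 := ih hT
end
end
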